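/- arXiv:2004.06934 — 2 statements merged into one kernel-verified Lean document; each statement's English description precedes it below -/
import Mathlib

section
/- Let Γ, Δ be maximal IL(M)-consistent sets with C ▷ D ∈ Γ, Γ ≺_B Δ, and C ∈ Δ. Then there exists a maximal IL(M)-consistent set Δ' with Γ ≺_B Δ', D ∈ Δ', Box ¬D ∈ Δ', and Δ ⊆_Box Δ' (i.e. every Box-formula in Δ is in Δ'). -/
/-- Formulas of interpretability logic: ⊥, variables, →, Box, ▷. -/
inductive Formula : Type
  | bot : Formula
  | var : ℕ → Formula
  | impl : Formula → Formula → Formula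
  | box : Formula → Formula
  | rhd : Formula → Formula → Formula

namespace Formula
def neg (φ : Formula) : Formula := φ.impl bot
def conj (φ ψ : Formula) : Formula := (φ.impl ψ.neg).neg
def disj (φ ψ : Formula) : Formula := φ.neg.impl ψ
def top : Formula := neg bot
def dia (φ : Formula) : Formula := ((box φ.neg)).neg
end Formula

open Formula

/-- Hilbert-style provability in IL extended with a set `Ax` of extra axioms. -/
inductive ILProof (Ax : Set Formula) : Formula → Prop
  | ax {φ} : φ ∈ Ax → ILProof Ax φ
  | k1 (φ ψ : Formula) : ILProof Ax (φ.impl (ψ.impl φ))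
  | k2 (φ ψ χ : Formula) : ILProof Ax ((φ.impl (ψ.impl χ)).impl ((φ.impl ψ).impl (φ.impl χ)))
  | dne (φ : Formula) : ILProof Ax ((φ.neg.neg).impl φ)
  | L1 (φ ψ : Formula) : ILProof Ax ((box (φ.impl ψ)).impl ((box φ).impl (box ψ)))
  | L2 (φ : Formula) : ILProof Ax ((box φ).impl (box (box φ)))
  | L3 (φ : Formula) : ILProof Ax ((box ((box φ).impl φ)).impl (box φ))
  | J1 (φ ψ : Formula) : ILProof Ax ((box (φ.impl ψ)).impl (rhd φ ψ))
  | J2 (φ ψ χ : Formula) : ILProof Ax (((rhd φ ψ).conj (rhd ψ χ)).impl (rhd φ χ))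
  | J3 (φ ψ χ : Formula) : ILProof Ax (((rhd φ χ).conj (rhd ψ χ)).impl (rhd (φ.disj ψ) χ))
  | J4 (φ ψ : Formula) : ILProof Ax ((rhd φ ψ).impl ((dia φ).impl (dia ψ)))
  | J5 (φ : Formula) : ILProof Ax (rhd (dia φ) φ)
  | mp {φ ψ} : ILProof Ax (φ.impl ψ) → ILProof Ax φ → ILProof Ax ψ
  | nec {φ} : ILProof Ax φ → ILProof Ax (box φ)

/-- Montagna's principle M as a set of axiom instances. -/
def Mschema : Set Formula :=
  {φ | ∃ A B C : Formula,
    φ = (rhd A B).impl (rhd (A.conj (box C)) (B.conj (box C)))}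

/-- Provability in IL(M). -/
def ILMProvable (φ : Formula) : Prop := ILProof Mschema φ

/-- A set of formulas is IL(X)-consistent if no finite list of its members
implies ⊥ (as an iterated implication) provably in IL(X). -/
def Consistent (Ax : Set Formula) (Γ : Set Formula) : Prop :=
  ¬ ∃ L : List Formula, (∀ ψ ∈ L, ψ ∈ Γ) ∧
      ILProof Ax (L.foldr Formula.impl Formula.bot)

/-- Maximal IL(X)-consistent set. -/
def MCS (Ax : Set Formula) (Γ : Set Formula) : Prop :=
  Consistent Ax Γ ∧ ∀ φ : Formula, φ ∈ Γ ∨ φ.neg ∈ Γ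

/-- The successor relation Γ ≺ Δ. -/
def prec (Γ Δ : Set Formula) : Prop :=
  ∀ A : Formula, box A ∈ Γ → A ∈ Δ ∧ box A ∈ Δ

/-- The C-critical successor relation Γ ≺_C Δ. -/
def critSucc (C : Formula) (Γ Δ : Set Formula) : Prop :=
  ∀ A : Formula, rhd A C ∈ Γ → A.neg ∈ Δ ∧ box A.neg ∈ Δ

/-- Box-inclusion Γ ⊆_Box Δ. -/
def boxSub (Γ Δ : Set Formula) : Prop :=
  ∀ A : Formula, box A ∈ Γ → box A ∈ Δ

section Infra

variable {Ax : Set Formula}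

inductive Deriv (Ax : Set Formula) (S : Set Formula) : Formula → Prop
  | hyp {φ} : φ ∈ S → Deriv Ax S φ
  | thm {φ} : ILProof Ax φ → Deriv Ax S φ
  | mp {φ ψ} : Deriv Ax S (φ.impl ψ) → Deriv Ax S φ → Deriv Ax S ψ

theorem ilp_id (φ : Formula) : ILProof Ax (φ.impl φ) :=
  .mp (.mp (.k2 φ (φ.impl φ) φ) (.k1 φ (φ.impl φ))) (.k1 φ φ)

theorem Deriv.mono {S T : Set Formula} {φ} (hST : S ⊆ T) (h : Deriv Ax S φ) :
    Deriv Ax T φ := by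
  induction h with
  | hyp h => exact .hyp (hST h)
  | thm h => exact .thm h
  | mp _ _ ih1 ih2 => exact ih1.mp ih2

theorem Deriv.ded {S : Set Formula} {φ ψ} (h : Deriv Ax (insert ψ S) φ) :
    Deriv Ax S (ψ.impl φ) := by
  induction h with
  | hyp h =>
    rcases Set.mem_insert_iff.1 h with rfl | h
    · exact .thm (ilp_id _)
    · exact .mp (.thm (.k1 _ _)) (.hyp h)
  | thm h => exact .mp (.thm (.k1 _ _)) (.thm h)
  | mp _ _ ih1 ih2 => exact .mp (.mp (.thm (.k2 _ _ _)) ih1) ih2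

theorem Deriv.toThm {φ} (h : Deriv Ax ∅ φ) : ILProof Ax φ := by
  induction h with
  | hyp h => exact absurd h (Set.notMem_empty _)
  | thm h => exact h
  | mp _ _ ih1 ih2 => exact ih1.mp ih2

theorem Deriv.bc {S : Set Formula} {φ} (h : Deriv Ax (insert φ.neg S) Formula.bot) :
    Deriv Ax S φ :=
  .mp (.thm (.dne φ)) h.ded

theorem Deriv.cut {S U : Set Formula} {φ} (h : Deriv Ax S φ)
    (hSU : ∀ s ∈ S, Deriv Ax U s) : Deriv Ax U φ := by
  induction h with
  | hyp h => exact hSU _ h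
  | thm h => exact .thm h
  | mp _ _ ih1 ih2 => exact ih1.mp ih2

end Infra

section Prop1
variable {Ax : Set Formula}

theorem thm_conj_intro (a b : Formula) : ILProof Ax (a.impl (b.impl (a.conj b))) := by
  apply Deriv.toThm
  apply Deriv.ded
  apply Deriv.ded
  apply Deriv.ded
  exact .mp (.mp (.hyp (by simp [Formula.neg, Formula.conj, Formula.disj, Formula.dia, Formula.top])) (.hyp (by simp [Formula.neg, Formula.conj, Formula.disj, Formula.dia, Formula.top] : a ∈ _))) (.hyp (by simp [Formula.neg, Formula.conj, Formula.disj, Formula.dia, Formula.top] : b ∈ _))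

theorem Deriv.pair {S : Set Formula} {a b} (h1 : Deriv Ax S a) (h2 : Deriv Ax S b) :
    Deriv Ax S (a.conj b) :=
  .mp (.mp (.thm (thm_conj_intro a b)) h1) h2

theorem thm_pair {a b} (h1 : ILProof Ax a) (h2 : ILProof Ax b) : ILProof Ax (a.conj b) :=
  .mp (.mp (thm_conj_intro a b) h1) h2

theorem thm_imp_trans {a b c : Formula} (h1 : ILProof Ax (a.impl b))
    (h2 : ILProof Ax (b.impl c)) : ILProof Ax (a.impl c) := by
  apply Deriv.toThm
  apply Deriv.ded
  exact .mp (.thm h2) (.mp (.thm h1) (.hyp (by simp [Formula.neg, Formula.conj, Formula.disj, Formula.dia, Formula.top])))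

theorem thm_contrapose {a b : Formula} (h : ILProof Ax (a.impl b)) :
    ILProof Ax (b.neg.impl a.neg) := by
  apply Deriv.toThm
  apply Deriv.ded
  apply Deriv.ded
  exact .mp (.hyp (by simp [Formula.neg, Formula.conj, Formula.disj, Formula.dia, Formula.top] : b.neg ∈ _)) (.mp (.thm h) (.hyp (by simp [Formula.neg, Formula.conj, Formula.disj, Formula.dia, Formula.top] : a ∈ _)))

theorem thm_conj_left (a b : Formula) : ILProof Ax ((a.conj b).impl a) := by
  apply Deriv.toThm
  apply Deriv.ded
  apply Deriv.bc
  refine Deriv.mp (.hyp (by simp [Formula.neg, Formula.conj, Formula.disj, Formula.dia, Formula.top] : a.conj b ∈ _)) ?_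
  apply Deriv.ded
  apply Deriv.ded
  exact .mp (.hyp (by simp [Formula.neg, Formula.conj, Formula.disj, Formula.dia, Formula.top] : a.neg ∈ _)) (.hyp (by simp [Formula.neg, Formula.conj, Formula.disj, Formula.dia, Formula.top] : a ∈ _))

theorem thm_conj_right (a b : Formula) : ILProof Ax ((a.conj b).impl b) := by
  apply Deriv.toThm
  apply Deriv.ded
  apply Deriv.bc
  refine Deriv.mp (.hyp (by simp [Formula.neg, Formula.conj, Formula.disj, Formula.dia, Formula.top] : a.conj b ∈ _)) ?_
  apply Deriv.ded
  apply Deriv.ded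
  exact .mp (.hyp (by simp [Formula.neg, Formula.conj, Formula.disj, Formula.dia, Formula.top] : b.neg ∈ _)) (.hyp (by simp [Formula.neg, Formula.conj, Formula.disj, Formula.dia, Formula.top] : b ∈ _))

theorem thm_disj_inl (a b : Formula) : ILProof Ax (a.impl (a.disj b)) := by
  apply Deriv.toThm
  apply Deriv.ded
  apply Deriv.ded
  apply Deriv.bc
  exact .mp (.hyp (by simp [Formula.neg, Formula.conj, Formula.disj, Formula.dia, Formula.top] : a.neg ∈ _)) (.hyp (by simp [Formula.neg, Formula.conj, Formula.disj, Formula.dia, Formula.top] : a ∈ _))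

theorem thm_disj_inr (a b : Formula) : ILProof Ax (b.impl (a.disj b)) := .k1 b a.neg

theorem thm_bot_imp (a : Formula) : ILProof Ax (Formula.bot.impl a) := by
  apply Deriv.toThm
  apply Deriv.ded
  apply Deriv.bc
  exact .hyp (by simp [Formula.neg, Formula.conj, Formula.disj, Formula.dia, Formula.top] : Formula.bot ∈ _)

end Prop1

section Foldr
variable {Ax : Set Formula}

theorem thm_comp (a b c : Formula) :
    ILProof Ax ((b.impl c).impl ((a.impl b).impl (a.impl c))) := by
  apply Deriv.toThm
  apply Deriv.ded; apply Deriv.ded; apply Deriv.ded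
  exact .mp (.hyp (by simp : b.impl c ∈ _))
    (.mp (.hyp (by simp : a.impl b ∈ _)) (.hyp (by simp : a ∈ _)))

theorem ilp_foldr_of {φ : Formula} (h : ILProof Ax φ) :
    ∀ L : List Formula, ILProof Ax (L.foldr Formula.impl φ)
  | [] => h
  | x :: L => .mp (.k1 _ x) (ilp_foldr_of h L)

theorem ilp_imp_foldr (φ : Formula) :
    ∀ L : List Formula, ILProof Ax (φ.impl (L.foldr Formula.impl φ))
  | [] => ilp_id φ
  | x :: L => thm_imp_trans (ilp_imp_foldr φ L) (.k1 _ x)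

theorem ilp_foldr_imp {a b : Formula} (h : ILProof Ax (a.impl b)) :
    ∀ L : List Formula, ILProof Ax ((L.foldr Formula.impl a).impl (L.foldr Formula.impl b))
  | [] => h
  | x :: L => .mp (thm_comp x _ _) (ilp_foldr_imp h L)

theorem ilp_foldr_mp_internal (a b : Formula) :
    ∀ L : List Formula, ILProof Ax ((L.foldr Formula.impl (a.impl b)).impl
      ((L.foldr Formula.impl a).impl (L.foldr Formula.impl b)))
  | [] => ilp_id _
  | x :: L => by
      have IH := ilp_foldr_mp_internal a b L
      set P := L.foldr Formula.impl (a.impl b)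
      set Q := L.foldr Formula.impl a
      set R := L.foldr Formula.impl b
      apply Deriv.toThm
      apply Deriv.ded; apply Deriv.ded; apply Deriv.ded
      exact .mp (.mp (.thm IH) (.mp (.hyp (by simp [P] : x.impl P ∈ _)) (.hyp (by simp : x ∈ _))))
        (.mp (.hyp (by simp [Q] : x.impl Q ∈ _)) (.hyp (by simp : x ∈ _)))

theorem deriv_of_foldr {S : Set Formula} {φ} :
    ∀ L : List Formula, (∀ ψ ∈ L, ψ ∈ S) →
      Deriv Ax S (L.foldr Formula.impl φ) → Deriv Ax S φ
  | [], _, h => h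
  | x :: L, hmem, h =>
      deriv_of_foldr L (fun ψ hψ => hmem ψ (.tail _ hψ))
        (h.mp (.hyp (hmem x (.head _))))

theorem deriv_to_foldr {S : Set Formula} {φ} (h : Deriv Ax S φ) :
    ∃ L : List Formula, (∀ ψ ∈ L, ψ ∈ S) ∧ ILProof Ax (L.foldr Formula.impl φ) := by
  induction h with
  | hyp h => exact ⟨[_], by simpa using h, ilp_id _⟩
  | thm h => exact ⟨[], by simp, h⟩
  | @mp φ ψ _ _ ih1 ih2 =>
    obtain ⟨L₁, hm1, hp1⟩ := ih1
    obtain ⟨L₂, hm2, hp2⟩ := ih2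
    refine ⟨L₁ ++ L₂, ?_, ?_⟩
    · intro χ hχ
      rcases List.mem_append.1 hχ with h | h
      · exact hm1 _ h
      · exact hm2 _ h
    · have p1 : ILProof Ax ((L₁ ++ L₂).foldr Formula.impl (φ.impl ψ)) := by
        rw [List.foldr_append]
        exact .mp (ilp_foldr_imp (ilp_imp_foldr _ L₂) L₁) hp1
      have p2 : ILProof Ax ((L₁ ++ L₂).foldr Formula.impl φ) := by
        rw [List.foldr_append]
        exact ilp_foldr_of hp2 L₁
      exact .mp (.mp (ilp_foldr_mp_internal φ ψ _) p1) p2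

theorem consistent_iff {Γ : Set Formula} :
    Consistent Ax Γ ↔ ¬ Deriv Ax Γ Formula.bot := by
  constructor
  · intro h hd
    obtain ⟨L, hm, hp⟩ := deriv_to_foldr hd
    exact h ⟨L, hm, hp⟩
  · rintro h ⟨L, hm, hp⟩
    exact h (deriv_of_foldr L hm (.thm hp))

theorem mcs_deriv {Γ : Set Formula} {φ} (h : MCS Ax Γ) (hd : Deriv Ax Γ φ) : φ ∈ Γ := by
  rcases h.2 φ with hφ | hn
  · exact hφ
  · exact absurd ((Deriv.hyp hn).mp hd) (consistent_iff.1 h.1)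

end Foldr

section Lindenbaum
variable {Ax : Set Formula}

theorem chain_list {c : Set (Set Formula)} (hc : IsChain (· ⊆ ·) c) (hne : c.Nonempty) :
    ∀ L : List Formula, (∀ ψ ∈ L, ψ ∈ ⋃₀ c) → ∃ t ∈ c, ∀ ψ ∈ L, ψ ∈ t
  | [], _ => ⟨hne.choose, hne.choose_spec, by simp⟩
  | x :: L, hmem => by
      obtain ⟨t, htc, hLt⟩ := chain_list hc hne L (fun ψ hψ => hmem ψ (.tail _ hψ))
      obtain ⟨s, hsc, hxs⟩ := hmem x (.head _)
      rcases eq_or_ne s t with rfl | hst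
      · exact ⟨s, hsc, fun ψ hψ => by
          rcases List.mem_cons.1 hψ with rfl | h
          · exact hxs
          · exact hLt _ h⟩
      · rcases hc hsc htc hst with h | h
        · exact ⟨t, htc, fun ψ hψ => by
            rcases List.mem_cons.1 hψ with rfl | hh
            · exact h hxs
            · exact hLt _ hh⟩
        · exact ⟨s, hsc, fun ψ hψ => by
            rcases List.mem_cons.1 hψ with rfl | hh
            · exact hxs
            · exact h (hLt _ hh)⟩

theorem lindenbaum {S : Set Formula} (h : Consistent Ax S) :
    ∃ Γ, S ⊆ Γ ∧ MCS Ax Γ := by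
  have hchaincond : ∀ c ⊆ {T | Consistent Ax T}, IsChain (· ⊆ ·) c → c.Nonempty →
      ∃ ub ∈ {T | Consistent Ax T}, ∀ s ∈ c, s ⊆ ub := by
    intro c hcS hchain hcne
    refine ⟨⋃₀ c, ?_, fun s hs => Set.subset_sUnion_of_mem hs⟩
    rw [Set.mem_setOf_eq, consistent_iff]
    intro hd
    obtain ⟨L, hmem, hp⟩ := deriv_to_foldr hd
    obtain ⟨t, htc, hLt⟩ := chain_list hchain hcne L hmem
    exact consistent_iff.1 (hcS htc) (deriv_of_foldr L hLt (.thm hp))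
  obtain ⟨m, hSm, hm⟩ :=
    zorn_subset_nonempty {T | Consistent Ax T} hchaincond S h
  · refine ⟨m, hSm, hm.1, fun φ => ?_⟩
    by_contra hcon
    push_neg at hcon
    obtain ⟨h1, h2⟩ := hcon
    have key : ∀ ψ : Formula, ψ ∉ m → Deriv Ax m ψ.neg := by
      intro ψ hψ
      have hni : ¬ Consistent Ax (insert ψ m) := by
        intro hcons
        exact hψ (hm.2 hcons (Set.subset_insert _ _) (Set.mem_insert _ _))
      rw [consistent_iff, not_not] at hni
      exact hni.ded
    have d1 := key φ h1
    have d2 := key φ.neg h2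
    exact consistent_iff.1 hm.1 (d2.mp d1)

end Lindenbaum

section Modal
variable {Ax : Set Formula}

theorem thm_box_mono {a b : Formula} (h : ILProof Ax (a.impl b)) :
    ILProof Ax ((Formula.box a).impl (Formula.box b)) :=
  .mp (.L1 a b) (.nec h)

theorem thm_box_conj (a b : Formula) :
    ILProof Ax ((Formula.box a).impl ((Formula.box b).impl (Formula.box (a.conj b)))) := by
  have s2 : ILProof Ax ((Formula.box a).impl (Formula.box (b.impl (a.conj b)))) :=
    .mp (.L1 _ _) (.nec (thm_conj_intro a b))
  apply Deriv.toThm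
  apply Deriv.ded; apply Deriv.ded
  have d1 : Deriv Ax (insert (Formula.box b) (insert (Formula.box a) ∅)) (Formula.box (b.impl (a.conj b))) :=
    .mp (.thm s2) (.hyp (by simp : Formula.box a ∈ _))
  exact .mp (.mp (.thm (.L1 b (a.conj b))) d1) (.hyp (by simp : Formula.box b ∈ _))

theorem thm_rhd_of_imp {a b : Formula} (h : ILProof Ax (a.impl b)) :
    ILProof Ax (Formula.rhd a b) :=
  .mp (.J1 a b) (.nec h)

theorem thm_rhd_trans {a b c : Formula} (h1 : ILProof Ax (Formula.rhd a b))
    (h2 : ILProof Ax (Formula.rhd b c)) : ILProof Ax (Formula.rhd a c) :=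
  .mp (.J2 a b c) (thm_pair h1 h2)

theorem thm_rhd_of_imp_or_dia {c a : Formula}
    (h : ILProof Ax (c.impl (a.disj (Formula.dia a)))) : ILProof Ax (Formula.rhd c a) :=
  thm_rhd_trans (thm_rhd_of_imp h)
    (.mp (.J3 a (Formula.dia a) a) (thm_pair (thm_rhd_of_imp (ilp_id a)) (.J5 a)))

theorem thm_negX_imp (D : Formula) :
    ILProof Ax ((D.conj (Formula.box D.neg)).neg.impl ((Formula.box D.neg).impl D.neg)) := by
  apply Deriv.toThm
  apply Deriv.ded; apply Deriv.ded; apply Deriv.ded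
  refine Deriv.mp (.hyp (by simp : (D.conj (Formula.box D.neg)).neg ∈ _)) ?_
  exact Deriv.pair (.hyp (by simp : D ∈ _)) (.hyp (by simp : Formula.box D.neg ∈ _))

theorem thm_dia_dia (D : Formula) :
    ILProof Ax ((Formula.dia D).impl (Formula.dia (D.conj (Formula.box D.neg)))) :=
  thm_imp_trans (thm_contrapose (.L3 D.neg)) (thm_contrapose (thm_box_mono (thm_negX_imp D)))

theorem thm_D_or (D : Formula) :
    ILProof Ax (D.impl ((D.conj (Formula.box D.neg)).disj
      (Formula.dia (D.conj (Formula.box D.neg))))) := by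
  set X := D.conj (Formula.box D.neg) with hX
  apply Deriv.toThm
  apply Deriv.ded; apply Deriv.ded; apply Deriv.ded
  -- goal: bot under {box X.neg, X.neg, D}
  have hdiaD : Deriv Ax (insert (Formula.box X.neg) (insert X.neg (insert D ∅))) (Formula.dia D) := by
    show Deriv Ax _ ((Formula.box D.neg).impl Formula.bot)
    apply Deriv.ded
    have h1 : Deriv Ax (insert (Formula.box D.neg) (insert (Formula.box X.neg) (insert X.neg (insert D ∅)))) ((Formula.box D.neg).impl D.neg) :=
      .mp (.thm (thm_negX_imp D)) (.hyp (by simp : X.neg ∈ _))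
    exact .mp (.mp h1 (.hyp (by simp : Formula.box D.neg ∈ _))) (.hyp (by simp : D ∈ _))
  have hdiaX : Deriv Ax (insert (Formula.box X.neg) (insert X.neg (insert D ∅))) (Formula.dia X) := .mp (.thm (thm_dia_dia D)) hdiaD
  exact .mp hdiaX (.hyp (by simp : Formula.box X.neg ∈ _))

theorem thm_rhd_D_X (D : Formula) :
    ILProof Ax (Formula.rhd D (D.conj (Formula.box D.neg))) :=
  thm_rhd_of_imp_or_dia (thm_D_or D)

end Modal

section Lists
variable {Ax : Set Formula}

theorem thm_mem_foldr_disj {a : Formula} :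
    ∀ {As : List Formula}, a ∈ As →
      ILProof Ax (a.impl (As.foldr Formula.disj Formula.bot))
  | x :: As, h => by
      rcases List.mem_cons.1 h with rfl | h
      · exact thm_disj_inl a _
      · exact thm_imp_trans (thm_mem_foldr_disj h) (thm_disj_inr _ _)

theorem thm_foldr_conj_mem {e : Formula} :
    ∀ {Es : List Formula}, e ∈ Es →
      ILProof Ax ((Es.foldr Formula.conj Formula.top).impl e)
  | x :: Es, h => by
      rcases List.mem_cons.1 h with rfl | h
      · exact thm_conj_left _ _
      · exact thm_imp_trans (thm_conj_right _ _) (thm_foldr_conj_mem h)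

theorem rhd_foldr_mem {Γ : Set Formula} (hΓ : MCS Ax Γ) {B : Formula} :
    ∀ As : List Formula, (∀ a ∈ As, Formula.rhd a B ∈ Γ) →
      Formula.rhd (As.foldr Formula.disj Formula.bot) B ∈ Γ
  | [], _ => mcs_deriv hΓ (.thm (thm_rhd_of_imp (thm_bot_imp B)))
  | x :: As, h => by
      have IH := rhd_foldr_mem hΓ As (fun a ha => h a (.tail _ ha))
      exact mcs_deriv hΓ (.mp (.thm (.J3 x _ B))
        (Deriv.pair (.hyp (h x (.head _))) (.hyp IH)))

theorem box_foldr_conj_mem {Δ : Set Formula} (hΔ : MCS Ax Δ) :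
    ∀ Es : List Formula, (∀ e ∈ Es, Formula.box e ∈ Δ) →
      Formula.box (Es.foldr Formula.conj Formula.top) ∈ Δ
  | [], _ => mcs_deriv hΔ (.thm (.nec (ilp_id Formula.bot)))
  | x :: Es, h => by
      have IH := box_foldr_conj_mem hΔ Es (fun e he => h e (.tail _ he))
      exact mcs_deriv hΔ (.mp (.mp (.thm (thm_box_conj x _)) (.hyp (h x (.head _)))) (.hyp IH))

end Lists


/-- in IL(M), if C ▷ D ∈ Γ ≺_B Δ ∋ C then there is Δ' with
Γ ≺_B Δ' ∋ D, Box ¬D and Δ ⊆_Box Δ'. -/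
theorem ilm_deficiency_elimination (B C D : Formula) (Γ Δ : Set Formula)
    (hΓ : MCS Mschema Γ) (hΔ : MCS Mschema Δ)
    (hCD : Formula.rhd C D ∈ Γ) (hcrit : critSucc B Γ Δ) (hC : C ∈ Δ) :
    ∃ Δ' : Set Formula, MCS Mschema Δ' ∧ critSucc B Γ Δ' ∧ D ∈ Δ' ∧
      Formula.box D.neg ∈ Δ' ∧ boxSub Δ Δ' := by
  classical
  set seed : Set Formula := insert D (insert (Formula.box D.neg)
    ({ψ | ∃ A, Formula.rhd A B ∈ Γ ∧ (ψ = A.neg ∨ ψ = Formula.box A.neg)} ∪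
     {ψ | ∃ E, Formula.box E ∈ Δ ∧ ψ = Formula.box E})) with hseed
  have hconsseed : Consistent Mschema seed := by
    rw [consistent_iff]
    intro hd
    obtain ⟨L, hLmem, hLpf⟩ := deriv_to_foldr hd
    have decomp : ∀ L' : List Formula, (∀ ψ ∈ L', ψ ∈ seed) →
        ∃ As Es : List Formula, (∀ a ∈ As, Formula.rhd a B ∈ Γ) ∧
          (∀ e ∈ Es, Formula.box e ∈ Δ) ∧
          ∀ ψ ∈ L', ψ = D ∨ ψ = Formula.box D.neg ∨
            (∃ a ∈ As, ψ = a.neg ∨ ψ = Formula.box a.neg) ∨ ∃ e ∈ Es, ψ = Formula.box e := by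
      intro L'
      induction L' with
      | nil => exact fun _ => ⟨[], [], by simp, by simp, by simp⟩
      | cons x L' ih =>
        intro hmem
        obtain ⟨As, Es, hAs, hEs, hcov⟩ := ih (fun ψ h => hmem ψ (.tail _ h))
        have hx := hmem x (.head _)
        rw [hseed] at hx
        rcases Set.mem_insert_iff.1 hx with rfl | hx
        · refine ⟨As, Es, hAs, hEs, fun ψ hψ => ?_⟩
          rcases List.mem_cons.1 hψ with rfl | h
          · exact Or.inl rfl
          · exact hcov ψ h
        rcases Set.mem_insert_iff.1 hx with rfl | hx
        · refine ⟨As, Es, hAs, hEs, fun ψ hψ => ?_⟩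
          rcases List.mem_cons.1 hψ with rfl | h
          · exact Or.inr (Or.inl rfl)
          · exact hcov ψ h
        simp only [Set.mem_union, Set.mem_setOf_eq] at hx
        rcases hx with ⟨A, hA, hform⟩ | ⟨E, hE, hform⟩
        · refine ⟨A :: As, Es, ?_, hEs, fun ψ hψ => ?_⟩
          · intro a ha
            rcases List.mem_cons.1 ha with rfl | ha
            · exact hA
            · exact hAs a ha
          rcases List.mem_cons.1 hψ with rfl | h
          · exact Or.inr (Or.inr (Or.inl ⟨A, List.mem_cons_self, hform⟩))
          rcases hcov ψ h with h1 | h1 | ⟨a, ha, h1⟩ | h1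
          · exact Or.inl h1
          · exact Or.inr (Or.inl h1)
          · exact Or.inr (Or.inr (Or.inl ⟨a, List.mem_cons_of_mem _ ha, h1⟩))
          · exact Or.inr (Or.inr (Or.inr h1))
        · refine ⟨As, E :: Es, hAs, ?_, fun ψ hψ => ?_⟩
          · intro e he
            rcases List.mem_cons.1 he with rfl | he
            · exact hE
            · exact hEs e he
          rcases List.mem_cons.1 hψ with rfl | h
          · exact Or.inr (Or.inr (Or.inr ⟨E, List.mem_cons_self, hform⟩))
          rcases hcov ψ h with h1 | h1 | h1 | ⟨e, he, h1⟩
          · exact Or.inl h1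
          · exact Or.inr (Or.inl h1)
          · exact Or.inr (Or.inr (Or.inl h1))
          · exact Or.inr (Or.inr (Or.inr ⟨e, List.mem_cons_of_mem _ he, h1⟩))
    obtain ⟨As, Es, hAs, hEs, hcov⟩ := decomp L hLmem
    set A := As.foldr Formula.disj Formula.bot with hA
    set E := Es.foldr Formula.conj Formula.top with hE
    set U : Set Formula := insert (Formula.box A.neg) (insert A.neg (insert (Formula.box E)
      (insert (Formula.box D.neg) (insert D (∅ : Set Formula))))) with hU
    have hUderiv : ∀ ψ ∈ L, Deriv Mschema U ψ := by
      intro ψ hψ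
      rcases hcov ψ hψ with rfl | rfl | ⟨a, ha, rfl | rfl⟩ | ⟨e, he, rfl⟩
      · exact .hyp (by rw [hU]; simp)
      · exact .hyp (by rw [hU]; simp)
      · exact .mp (.thm (thm_contrapose (thm_mem_foldr_disj ha)))
          (.hyp (by rw [hU]; simp [A]))
      · exact .mp (.thm (thm_box_mono (thm_contrapose (thm_mem_foldr_disj ha))))
          (.hyp (by rw [hU]; simp [A]))
      · exact .mp (.thm (thm_box_mono (thm_foldr_conj_mem he)))
          (.hyp (by rw [hU]; simp [E]))
    have hSbot : Deriv Mschema {ψ | ψ ∈ L} Formula.bot :=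
      deriv_of_foldr L (fun ψ h => h) (.thm hLpf)
    have hUbot : Deriv Mschema U Formula.bot :=
      hSbot.cut (fun s hs => hUderiv s hs)
    have hthm : ILProof Mschema (D.impl ((Formula.box D.neg).impl ((Formula.box E).impl
        (A.disj (Formula.dia A))))) :=
      Deriv.toThm (hUbot.ded.ded.ded.ded.ded)
    set X := D.conj (Formula.box D.neg) with hX
    have hXE : ILProof Mschema ((X.conj (Formula.box E)).impl (A.disj (Formula.dia A))) := by
      apply Deriv.toThm
      apply Deriv.ded
      have ht : Deriv Mschema (insert (X.conj (Formula.box E)) ∅) (X.conj (Formula.box E)) :=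
        .hyp (Set.mem_insert _ _)
      have hXd := Deriv.mp (.thm (thm_conj_left X (Formula.box E))) ht
      have hDd := Deriv.mp (.thm (thm_conj_left D (Formula.box D.neg))) hXd
      have hbnD := Deriv.mp (.thm (thm_conj_right D (Formula.box D.neg))) hXd
      have hbE := Deriv.mp (.thm (thm_conj_right X (Formula.box E))) ht
      exact .mp (.mp (.mp (.thm hthm) hDd) hbnD) hbE
    have hrhdXEA : ILProof Mschema (Formula.rhd (X.conj (Formula.box E)) A) :=
      thm_rhd_of_imp_or_dia hXE
    have hAB : Formula.rhd A B ∈ Γ := rhd_foldr_mem hΓ As hAs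
    have hboxE : Formula.box E ∈ Δ := box_foldr_conj_mem hΔ Es hEs
    have hCX : Formula.rhd C X ∈ Γ :=
      mcs_deriv hΓ (.mp (.thm (.J2 C D X)) (Deriv.pair (.hyp hCD) (.thm (thm_rhd_D_X D))))
    have hMax : ILProof Mschema ((Formula.rhd C X).impl
        (Formula.rhd (C.conj (Formula.box E)) (X.conj (Formula.box E)))) :=
      .ax ⟨C, X, E, rfl⟩
    have hCEXE : Formula.rhd (C.conj (Formula.box E)) (X.conj (Formula.box E)) ∈ Γ :=
      mcs_deriv hΓ (.mp (.thm hMax) (.hyp hCX))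
    have hCEA : Formula.rhd (C.conj (Formula.box E)) A ∈ Γ :=
      mcs_deriv hΓ (.mp (.thm (.J2 _ _ _)) (Deriv.pair (.hyp hCEXE) (.thm hrhdXEA)))
    have hCEB : Formula.rhd (C.conj (Formula.box E)) B ∈ Γ :=
      mcs_deriv hΓ (.mp (.thm (.J2 _ _ _)) (Deriv.pair (.hyp hCEA) (.hyp hAB)))
    have hnCE : (C.conj (Formula.box E)).neg ∈ Δ := (hcrit _ hCEB).1
    have hCE : C.conj (Formula.box E) ∈ Δ :=
      mcs_deriv hΔ (Deriv.pair (.hyp hC) (.hyp hboxE))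
    exact consistent_iff.1 hΔ.1 (Deriv.mp (.hyp hnCE) (.hyp hCE))
  obtain ⟨Δ', hsub, hΔ'⟩ := lindenbaum hconsseed
  refine ⟨Δ', hΔ', ?_, hsub (by rw [hseed]; exact Set.mem_insert _ _),
    hsub (by rw [hseed]; exact Set.mem_insert_iff.2 (Or.inr (Set.mem_insert _ _))), ?_⟩
  · intro A hA
    constructor
    · refine hsub ?_
      rw [hseed]
      simp only [Set.mem_insert_iff, Set.mem_union, Set.mem_setOf_eq]
      exact Or.inr (Or.inr (Or.inl ⟨A, hA, Or.inl rfl⟩))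
    · refine hsub ?_
      rw [hseed]
      simp only [Set.mem_insert_iff, Set.mem_union, Set.mem_setOf_eq]
      exact Or.inr (Or.inr (Or.inl ⟨A, hA, Or.inr rfl⟩))
  · intro E hE
    refine hsub ?_
    rw [hseed]
    simp only [Set.mem_insert_iff, Set.mem_union, Set.mem_setOf_eq]
    exact Or.inr (Or.inr (Or.inr ⟨E, hE, rfl⟩))
end

section
/- IL(M) proves Box A ∨ Box B if and only if IL(M) proves Box A or IL(M) proves Box B (disjunction property for Box). -/
open Formula

namespace ILAux
open Formula

/-- Proofs from a list of hypotheses. -/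
inductive HProof (Ax : Set Formula) : List Formula → Formula → Prop
  | hyp {Γ φ} : φ ∈ Γ → HProof Ax Γ φ
  | thm {Γ φ} : ILProof Ax φ → HProof Ax Γ φ
  | mp {Γ φ ψ} : HProof Ax Γ (φ.impl ψ) → HProof Ax Γ φ → HProof Ax Γ ψ

variable {Ax : Set Formula}

lemma id_thm (φ : Formula) : ILProof Ax (φ.impl φ) :=
  ((ILProof.k2 φ (φ.impl φ) φ).mp (ILProof.k1 φ (φ.impl φ))).mp (ILProof.k1 φ φ)

lemma deduction {Γ : List Formula} {φ ψ : Formula}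
    (h : HProof Ax (φ :: Γ) ψ) : HProof Ax Γ (φ.impl ψ) := by
  generalize hΓ : φ :: Γ = Γ' at h
  induction h with
  | hyp hm =>
    subst hΓ
    rcases List.mem_cons.mp hm with h | h
    · subst h; exact .thm (id_thm _)
    · exact .mp (.thm (ILProof.k1 _ _)) (.hyp h)
  | thm ht => exact .mp (.thm (ILProof.k1 _ _)) (.thm ht)
  | mp _ _ ih1 ih2 =>
    exact .mp (.mp (.thm (ILProof.k2 _ _ _)) ih1) ih2

lemma close {φ : Formula} (h : HProof Ax [] φ) : ILProof Ax φ := by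
  generalize hΓ : ([] : List Formula) = Γ' at h
  induction h with
  | hyp hm => subst hΓ; simp at hm
  | thm ht => exact ht
  | mp _ _ ih1 ih2 => exact ih1.mp ih2

lemma efq (φ : Formula) : ILProof Ax (Formula.bot.impl φ) :=
  close (deduction (.mp (.thm (ILProof.dne φ))
    (.mp (.thm (ILProof.k1 Formula.bot (neg φ))) (.hyp (by simp)))))

lemma hEfq {Γ : List Formula} {φ : Formula} (h : HProof Ax Γ Formula.bot) :
    HProof Ax Γ φ := .mp (.thm (efq φ)) h

lemma hByContra {Γ : List Formula} {φ : Formula}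
    (h : HProof Ax (neg φ :: Γ) Formula.bot) : HProof Ax Γ φ :=
  .mp (.thm (ILProof.dne φ)) (deduction h)

lemma imp_trans {a b c : Formula} (h1 : ILProof Ax (a.impl b))
    (h2 : ILProof Ax (b.impl c)) : ILProof Ax (a.impl c) :=
  close (deduction (.mp (.thm h2) (.mp (.thm h1) (.hyp (by simp)))))

lemma contrapose_thm {a b : Formula} (h : ILProof Ax (a.impl b)) :
    ILProof Ax ((neg b).impl (neg a)) :=
  close (deduction (deduction
    (.mp (.hyp (show neg b ∈ [a, neg b] by simp))
      (.mp (.thm h) (.hyp (by simp))))))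

lemma taut_and_intro (a b : Formula) :
    ILProof Ax (a.impl (b.impl (conj a b))) := by
  refine close (deduction (deduction (deduction ?_)))
  exact .mp (.mp (.hyp (show a.impl b.neg ∈ [a.impl b.neg, b, a] by simp))
    (.hyp (show a ∈ [a.impl b.neg, b, a] by simp)))
    (.hyp (show b ∈ [a.impl b.neg, b, a] by simp))

lemma taut_and_left (a b : Formula) : ILProof Ax ((conj a b).impl a) := by
  refine close (deduction (hByContra ?_))
  refine .mp (.hyp (show conj a b ∈ [neg a, conj a b] by simp)) ?_
  refine deduction (hEfq ?_)
  exact .mp (.hyp (show neg a ∈ [a, neg a, conj a b] by simp))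
    (.hyp (show a ∈ [a, neg a, conj a b] by simp))

lemma taut_and_right (a b : Formula) : ILProof Ax ((conj a b).impl b) := by
  refine close (deduction (hByContra ?_))
  refine .mp (.hyp (show conj a b ∈ [neg b, conj a b] by simp)) ?_
  exact .mp (.thm (ILProof.k1 (neg b) a)) (.hyp (by simp))

/-- From hypotheses, conjunction introduction. -/
lemma hAndIntro {Γ : List Formula} {a b : Formula} (ha : HProof Ax Γ a)
    (hb : HProof Ax Γ b) : HProof Ax Γ (conj a b) :=
  .mp (.mp (.thm (taut_and_intro a b)) ha) hb

lemma hAndLeft {Γ : List Formula} {a b : Formula} (h : HProof Ax Γ (conj a b)) :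
    HProof Ax Γ a := .mp (.thm (taut_and_left a b)) h

lemma hAndRight {Γ : List Formula} {a b : Formula} (h : HProof Ax Γ (conj a b)) :
    HProof Ax Γ b := .mp (.thm (taut_and_right a b)) h

lemma boxMp {a b : Formula} (h1 : ILProof Ax (box (a.impl b)))
    (h2 : ILProof Ax (box a)) : ILProof Ax (box b) :=
  ((ILProof.L1 a b).mp h1).mp h2

lemma boxOfImp {a b : Formula} (h : ILProof Ax (a.impl b))
    (ha : ILProof Ax (box a)) : ILProof Ax (box b) := boxMp h.nec ha

lemma box2 {a b c : Formula} (h : ILProof Ax (a.impl (b.impl c)))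
    (ha : ILProof Ax (box a)) (hb : ILProof Ax (box b)) : ILProof Ax (box c) :=
  boxMp (boxMp h.nec ha) hb

lemma box_conj_imp (a b : Formula) :
    ILProof Ax ((box a).impl ((box b).impl (box (conj a b)))) :=
  imp_trans ((ILProof.L1 a (b.impl (conj a b))).mp (taut_and_intro a b).nec)
    (ILProof.L1 b (conj a b))

lemma box_proj_left (a b : Formula) :
    ILProof Ax ((box (conj a b)).impl (box a)) :=
  (ILProof.L1 (conj a b) a).mp (taut_and_left a b).nec

lemma box_proj_right (a b : Formula) :
    ILProof Ax ((box (conj a b)).impl (box b)) :=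
  (ILProof.L1 (conj a b) b).mp (taut_and_right a b).nec

/-- `NBox φ C` is `□¬(φ ∧ □C)`. -/
def NBox (φ C : Formula) : Formula := box (neg (conj φ (box C)))

/-- Tautology for J1: `(a→b) → (¬(b∧x) → ¬(a∧x))`. -/
lemma taut_J1 (a b x : Formula) :
    ILProof Ax ((a.impl b).impl ((neg (conj b x)).impl (neg (conj a x)))) := by
  refine close (deduction (deduction (deduction ?_)))
  set Γ : List Formula := [conj a x, neg (conj b x), a.impl b] with hΓ
  have ha : HProof Ax Γ a := hAndLeft (.hyp (show conj a x ∈ Γ by simp [hΓ]))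
  have hx : HProof Ax Γ x := hAndRight (.hyp (show conj a x ∈ Γ by simp [hΓ]))
  have hb : HProof Ax Γ b := .mp (.hyp (show a.impl b ∈ Γ by simp [hΓ])) ha
  exact .mp (.hyp (show neg (conj b x) ∈ Γ by simp [hΓ])) (hAndIntro hb hx)

/-- Tautology for J3. -/
lemma taut_J3 (a b x : Formula) :
    ILProof Ax ((neg (conj a x)).impl ((neg (conj b x)).impl
      (neg (conj (disj a b) x)))) := by
  refine close (deduction (deduction (deduction ?_)))
  set Γ : List Formula := [conj (disj a b) x, neg (conj b x), neg (conj a x)] with hΓ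
  have hd : HProof Ax Γ (disj a b) := hAndLeft (.hyp (show conj (disj a b) x ∈ Γ by simp [hΓ]))
  have hx : HProof Ax Γ x := hAndRight (.hyp (show conj (disj a b) x ∈ Γ by simp [hΓ]))
  have hna : HProof Ax Γ (neg a) := by
    refine deduction ?_
    refine .mp (.hyp (show neg (conj a x) ∈ a :: Γ by simp [hΓ])) ?_
    exact hAndIntro (.hyp (by simp))
      (hAndRight (.hyp (show conj (disj a b) x ∈ a :: Γ by simp [hΓ])))
  have hb : HProof Ax Γ b := .mp hd hna
  exact .mp (.hyp (show neg (conj b x) ∈ Γ by simp [hΓ])) (hAndIntro hb hx)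

/-- Tautology for J4: `□⊤ → (¬(a∧□⊤) → ¬a)`. -/
lemma taut_J4 (a : Formula) :
    ILProof Ax ((box top).impl ((neg (conj a (box top))).impl (neg a))) := by
  refine close (deduction (deduction (deduction ?_)))
  set Γ : List Formula := [a, neg (conj a (box top)), box top] with hΓ
  refine .mp (.hyp (show neg (conj a (box top)) ∈ Γ by simp [hΓ])) ?_
  exact hAndIntro (.hyp (show a ∈ Γ by simp [hΓ]))
    (.hyp (show box top ∈ Γ by simp [hΓ]))

lemma box_top : ILProof Ax (box top) := (id_thm Formula.bot).nec

/-- Key implication for J5: `□¬(φ∧□C) → ¬(◇φ ∧ □C)`. -/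
lemma J5_key (φ C : Formula) :
    ILProof Ax ((NBox φ C).impl (neg (conj (dia φ) (box C)))) := by
  refine close (deduction (deduction ?_))
  set Γ : List Formula := [conj (dia φ) (box C), NBox φ C] with hΓ
  have hnb : HProof Ax Γ (neg (box (neg φ))) := hAndLeft (.hyp (show conj (dia φ) (box C) ∈ Γ by simp [hΓ, NBox]))
  have hc : HProof Ax Γ (box C) :=
    hAndRight (.hyp (show conj (dia φ) (box C) ∈ Γ by simp [hΓ]))
  have hcc : HProof Ax Γ (box (box C)) := .mp (.thm (ILProof.L2 C)) hc
  have hbig : HProof Ax Γ (box (conj (neg (conj φ (box C))) (box C))) :=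
    .mp (.mp (.thm (box_conj_imp _ _)) (.hyp (show NBox φ C ∈ Γ by simp [hΓ]))) hcc
  have tin : ILProof Ax ((conj (neg (conj φ (box C))) (box C)).impl (neg φ)) := by
    refine close (deduction (deduction ?_))
    set Δ : List Formula := [φ, conj (neg (conj φ (box C))) (box C)] with hΔ
    refine .mp (hAndLeft (.hyp (show conj (neg (conj φ (box C))) (box C) ∈ Δ by simp [hΔ]))) ?_
    exact hAndIntro (.hyp (show φ ∈ Δ by simp [hΔ]))
      (hAndRight (.hyp (show conj (neg (conj φ (box C))) (box C) ∈ Δ by simp [hΔ])))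
  have hbnφ : HProof Ax Γ (box (neg φ)) :=
    .mp (.thm ((ILProof.L1 _ _).mp tin.nec)) hbig
  exact .mp hnb hbnφ

/-- For M: `(B ∧ □(C∧D)) → ((B∧□C)∧□D)`. -/
lemma M_E1 (B C D : Formula) :
    ILProof Ax ((conj B (box (conj C D))).impl (conj (conj B (box C)) (box D))) := by
  refine close (deduction ?_)
  set Γ : List Formula := [conj B (box (conj C D))] with hΓ
  have hb : HProof Ax Γ B := hAndLeft (.hyp (show conj B (box (conj C D)) ∈ Γ by simp [hΓ]))
  have hcd : HProof Ax Γ (box (conj C D)) :=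
    hAndRight (.hyp (show conj B (box (conj C D)) ∈ Γ by simp [hΓ]))
  exact hAndIntro (hAndIntro hb (.mp (.thm (box_proj_left C D)) hcd))
    (.mp (.thm (box_proj_right C D)) hcd)

/-- For M: `((A∧□C)∧□D) → (A ∧ □(C∧D))`. -/
lemma M_E2 (A C D : Formula) :
    ILProof Ax ((conj (conj A (box C)) (box D)).impl (conj A (box (conj C D)))) := by
  refine close (deduction ?_)
  set Γ : List Formula := [conj (conj A (box C)) (box D)] with hΓ
  have hin : HProof Ax Γ (conj A (box C)) := hAndLeft (.hyp (show conj (conj A (box C)) (box D) ∈ Γ by simp [hΓ]))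
  have hd : HProof Ax Γ (box D) :=
    hAndRight (.hyp (show conj (conj A (box C)) (box D) ∈ Γ by simp [hΓ]))
  exact hAndIntro (hAndLeft hin) (.mp (.mp (.thm (box_conj_imp C D)) (hAndRight hin)) hd)

lemma taut_or_inl (p q : Formula) : ILProof Ax (p.impl (disj p q)) := by
  refine close (deduction (deduction (hEfq ?_)))
  exact .mp (.hyp (show neg p ∈ [neg p, p] by simp)) (.hyp (by simp))

/-- The valuation used for the disjunction property. -/
def val : Formula → Prop
  | Formula.bot => False
  | Formula.var _ => True
  | Formula.impl φ ψ => val φ → val ψ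
  | Formula.box φ => ILMProvable (Formula.box φ)
  | Formula.rhd φ ψ => ∀ C : Formula,
      ILMProvable (NBox ψ C) → ILMProvable (NBox φ C)

lemma val_neg (φ : Formula) : val (neg φ) ↔ ¬ val φ := by
  simp [Formula.neg, val]

lemma val_conj (φ ψ : Formula) : val (conj φ ψ) ↔ val φ ∧ val ψ := by
  simp only [Formula.conj, Formula.neg, val]
  tauto

lemma sound {φ : Formula} (h : ILMProvable φ) : val φ := by
  induction h with
  | ax hm =>
    obtain ⟨A, B, C, rfl⟩ := hm
    show val (rhd A B) → val (rhd (A.conj (box C)) (B.conj (box C)))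
    intro hAB D hin
    -- hin : ⊢ □¬((B∧□C)∧□D); goal : ⊢ □¬((A∧□C)∧□D)
    have s1 : ILMProvable (NBox B (conj C D)) :=
      boxMp (contrapose_thm (M_E1 B C D)).nec hin
    have s2 : ILMProvable (NBox A (conj C D)) := hAB (conj C D) s1
    exact boxMp (contrapose_thm (M_E2 A C D)).nec s2
  | k1 φ ψ => intro a _; exact a
  | k2 φ ψ χ => intro h1 h2 h3; exact h1 h3 (h2 h3)
  | dne φ =>
    show val (neg (neg φ)) → val φ
    rw [val_neg, val_neg]; tauto
  | L1 φ ψ => exact fun h1 h2 => ((ILProof.L1 φ ψ).mp h1).mp h2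
  | L2 φ => exact fun h1 => (ILProof.L2 φ).mp h1
  | L3 φ => exact fun h1 => (ILProof.L3 φ).mp h1
  | J1 φ ψ =>
    intro h C hc
    exact box2 (taut_J1 φ ψ (box C)) h hc
  | J2 φ ψ χ =>
    intro h C
    rw [val_conj] at h
    exact fun hc => h.1 C (h.2 C hc)
  | J3 φ ψ χ =>
    intro h C hc
    rw [val_conj] at h
    exact box2 (taut_J3 φ ψ (box C)) (h.1 C hc) (h.2 C hc)
  | J4 φ ψ =>
    intro h hφ
    rw [show dia φ = neg (box (neg φ)) from rfl, val_neg] at hφ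
    rw [show dia ψ = neg (box (neg ψ)) from rfl, val_neg]
    intro hψ
    apply hφ
    have h1 : ILMProvable (NBox ψ top) :=
      boxOfImp (contrapose_thm (taut_and_left ψ (box top))) hψ
    have h2 : ILMProvable (NBox φ top) := h top h1
    exact box2 (taut_J4 φ) (ILProof.nec box_top) h2
  | J5 φ =>
    intro C hc
    exact boxMp (J5_key φ C).nec ((ILProof.L2 _).mp hc)
  | mp _ _ ih1 ih2 => exact ih1 ih2
  | nec h _ => exact ILProof.nec h

end ILAux

/-- disjunction property for Box in IL(M). -/
theorem ilm_box_disjunction (A B : Formula) :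
    ILMProvable ((Formula.box A).disj (Formula.box B)) ↔
      (ILMProvable (Formula.box A) ∨ ILMProvable (Formula.box B)) := by
  constructor
  · intro h
    have hv := ILAux.sound h
    have hv' : (ILMProvable (Formula.box A) → False) → ILMProvable (Formula.box B) := hv
    by_cases hA : ILMProvable (Formula.box A)
    · exact Or.inl hA
    · exact Or.inr (hv' hA)
  · rintro (h | h)
    · exact (ILAux.taut_or_inl (Formula.box A) (Formula.box B)).mp h
    · exact (ILProof.k1 (Formula.box B) (Formula.box A).neg).mp h
end
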